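/- Let G be a cograph with cotree T and x a new vertex with neighbourhood N(x) such that the root of T is mixed (i.e. some but not all vertices of G are in N(x)). Then G+x is a cograph if and only if there exists a mixed node u of T such that (1) every child of u is uniform (full or hollow with respect to N(x)), and (2) for every vertex y ∉ V(u), y ∈ N(x) if and only if the lowest common ancestor of y and u in T is a series node. -/

import Mathlib

universe u

def IsCograph {α : Type*} (G : SimpleGraph α) : Prop :=
  ¬ ∃ f : Fin 4 → α, Function.Injective f ∧
      ∀ i j : Fin 4, G.Adj (f i) (f j) ↔ (i.val + 1 = j.val ∨ j.val + 1 = i.val)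

inductive Cotree (V : Type u) : Type u where
  | leaf : V → Cotree V
  | node : Bool → List (Cotree V) → Cotree V

namespace Cotree

variable {V : Type u}

def leaves : Cotree V → List V
  | .leaf v => [v]
  | .node _ ts => ts.attach.flatMap (fun t => t.1.leaves)

decreasing_by simp_wf; have := List.sizeOf_lt_of_mem t.2; omega

def subtrees : Cotree V → List (Cotree V)
  | .leaf v => [.leaf v]
  | .node b ts => .node b ts :: ts.attach.flatMap (fun t => t.1.subtrees)

decreasing_by simp_wf; have := List.sizeOf_lt_of_mem t.2; omega

def children : Cotree V → List (Cotree V)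
  | .leaf _ => []
  | .node _ ts => ts

def isSeries : Cotree V → Prop
  | .node true _ => True
  | _ => False

def isParallel : Cotree V → Prop
  | .node false _ => True
  | _ => False

def adj : Cotree V → V → V → Prop
  | .leaf _, _, _ => False
  | .node b ts, x, y =>
      (∃ t ∈ ts.attach, adj t.1 x y) ∨
      (b = true ∧ ∃ t ∈ ts.attach, ∃ s ∈ ts.attach,
        t.1 ≠ s.1 ∧ x ∈ t.1.leaves ∧ y ∈ s.1.leaves)

decreasing_by simp_wf; have := List.sizeOf_lt_of_mem t.2; omega

def valid : Cotree V → Prop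
  | .leaf _ => True
  | .node b ts => 2 ≤ ts.length ∧ ∀ t ∈ ts.attach, valid t.1 ∧
      ∀ b' ts', t.1 = .node b' ts' → b' ≠ b

decreasing_by simp_wf; have := List.sizeOf_lt_of_mem t.2; omega

def hollow (N : Set V) (t : Cotree V) : Prop := ∀ v ∈ t.leaves, v ∉ N
def full (N : Set V) (t : Cotree V) : Prop := ∀ v ∈ t.leaves, v ∈ N
def uniform (N : Set V) (t : Cotree V) : Prop := full N t ∨ hollow N t
def mixed (N : Set V) (t : Cotree V) : Prop := ¬ uniform N t

def forced (N : Set V) : Cotree V → Prop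
  | .leaf v => v ∈ N
  | .node b ts =>
      full N (.node b ts) ∨
      (b = false ∧ ∀ t ∈ ts, ¬ hollow N t) ∨
      (b = true ∧ ∀ t ∈ ts.attach, forced N t.1)

decreasing_by simp_wf; have := List.sizeOf_lt_of_mem t.2; omega

def eligible (N : Set V) : Cotree V → Cotree V → Prop
  | .leaf v, u => u = .leaf v
  | .node b ts, u => u = .node b ts ∨
      ∃ t ∈ ts.attach, eligible N t.1 u ∧
        (b = false → ∀ s ∈ ts, s ≠ t.1 → hollow N s)

decreasing_by simp_wf; have := List.sizeOf_lt_of_mem t.2; omega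

def IsLcaLeaves (T u : Cotree V) (x y : V) : Prop :=
  u ∈ T.subtrees ∧ x ∈ u.leaves ∧ y ∈ u.leaves ∧
    ∀ c ∈ u.children, ¬ (x ∈ c.leaves ∧ y ∈ c.leaves)

def IsLcaNodeLeaf (T w u : Cotree V) (y : V) : Prop :=
  w ∈ T.subtrees ∧ u ∈ w.subtrees ∧ y ∈ w.leaves ∧
    ∀ c ∈ w.children, ¬ (u ∈ c.subtrees ∧ y ∈ c.leaves)

def graphOf (T : Cotree V) : SimpleGraph V :=
  SimpleGraph.fromRel (fun a b => T.adj a b)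

def graphPlus (T : Cotree V) (N : Set V) : SimpleGraph (Option V) :=
  SimpleGraph.fromRel (fun a b =>
    match a, b with
    | some u, some v => T.adj u v
    | none, some v => v ∈ N
    | _, _ => False)

def IsConstrainedCompletion (T : Cotree V) (Nx N' : Set V) : Prop :=
  Nx ⊆ N' ∧ (∀ v ∈ N', v ∈ T.leaves) ∧ IsCograph (graphPlus T N')

def IsMinimalConstrainedCompletion (T : Cotree V) (Nx N' : Set V) : Prop :=
  IsConstrainedCompletion T Nx N' ∧
    ∀ N'' ⊆ N', IsConstrainedCompletion T Nx N'' → N'' = N'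

def IsInsertionNode (T : Cotree V) (N' : Set V) (u : Cotree V) : Prop :=
  u ∈ T.subtrees ∧ mixed N' u ∧ (∀ c ∈ u.children, uniform N' c) ∧
    ∀ y ∈ T.leaves, y ∉ u.leaves →
      (y ∈ N' ↔ ∃ w, IsLcaNodeLeaf T w u y ∧ w.isSeries)

def IsCMInsertionNode (T : Cotree V) (Nx : Set V) (u : Cotree V) : Prop :=
  ∃ N', IsMinimalConstrainedCompletion T Nx N' ∧ IsInsertionNode T N' u

def anchored (T u : Cotree V) (Nx : Set V) : Set V :=
  Nx ∪ {y | y ∈ T.leaves ∧ y ∉ u.leaves ∧ ∃ w, IsLcaNodeLeaf T w u y ∧ w.isSeries}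
     ∪ {y | ∃ c ∈ u.children, ¬ hollow Nx c ∧ y ∈ c.leaves}

end Cotree

/-!
Induction on the cotree; a `P₄` never straddles a join (series node) or a disjoint union
(parallel node).

If the root has a mixed child `t`, every leaf `y` of a sibling of `t` must be adjacent to `x`
exactly when the root is series: otherwise `x`, `y` and two leaves `a ∈ N(x)`, `v ∉ N(x)` taken
from different children of `t` (a node of the opposite type) induce a `P₄`. Given this, `x`
together with `V(t)` is joined to, or separated from, the rest of `G + x`, so `G + x` is a cograph
iff `G[V(t)] + x` is, and the insertion node of `t` is one of `T` and conversely.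

If all children of the root are uniform, the root is the insertion node; `x` and the leaves on
one side of `N(x)` are then joined to, or separated from, the others, and `x` is universal or
isolated on its side, so no `P₄` passes through `x`, and none avoids it since `G` is a cograph.
-/

section InducedP4

variable {α β : Type*} {G : SimpleGraph α} {f : Fin 4 → α}

def IsInducedP4 (G : SimpleGraph α) (f : Fin 4 → α) : Prop :=
  Function.Injective f ∧
    ∀ i j : Fin 4, G.Adj (f i) (f j) ↔ (i.val + 1 = j.val ∨ j.val + 1 = i.val)

def IsCographOn (G : SimpleGraph α) (S : Set α) : Prop :=
  ∀ f : Fin 4 → α, (∀ i, f i ∈ S) → ¬ IsInducedP4 G f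

lemma isCograph_iff_forall_not_isInducedP4 : IsCograph G ↔ ∀ f, ¬ IsInducedP4 G f := not_exists

lemma isInducedP4_path {a b c d : α} (hab : G.Adj a b) (hbc : G.Adj b c) (hcd : G.Adj c d)
    (hac : ¬ G.Adj a c) (had : ¬ G.Adj a d) (hbd : ¬ G.Adj b d)
    (nac : a ≠ c) (nad : a ≠ d) (nbd : b ≠ d) : IsInducedP4 G ![a, b, c, d] := by
  have nab := hab.ne
  have nbc := hbc.ne
  have ncd := hcd.ne
  refine ⟨fun i j h => ?_, fun i j => ?_⟩
  · fin_cases i <;> fin_cases j <;> simp_all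
  · have := hab.symm
    have := hbc.symm
    have := hcd.symm
    have : ¬ G.Adj c a := fun h => hac h.symm
    have : ¬ G.Adj d a := fun h => had h.symm
    have : ¬ G.Adj d b := fun h => hbd h.symm
    fin_cases i <;> fin_cases j <;> simp_all

namespace IsInducedP4

lemma congr {H : SimpleGraph α} (hf : IsInducedP4 G f)
    (h : ∀ i j, G.Adj (f i) (f j) ↔ H.Adj (f i) (f j)) : IsInducedP4 H f :=
  ⟨hf.1, fun i j => (h i j).symm.trans (hf.2 i j)⟩

lemma of_comp {H : SimpleGraph β} {e : β → α} {g : Fin 4 → β} (hf : IsInducedP4 G (e ∘ g))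
    (he : ∀ a b, G.Adj (e a) (e b) ↔ H.Adj a b) : IsInducedP4 H g :=
  ⟨hf.1.of_comp, fun i j => (he _ _).symm.trans (hf.2 i j)⟩

lemma exists_adj (hf : IsInducedP4 G f) (i : Fin 4) : ∃ j, G.Adj (f i) (f j) := by
  obtain ⟨j, hj⟩ : ∃ j : Fin 4, i.val + 1 = j.val ∨ j.val + 1 = i.val := by revert i; decide
  exact ⟨j, (hf.2 i j).2 hj⟩

/-- No vertex of a `P₄` is isolated or universal in it. -/
lemma not_forall_adj_iff (hf : IsInducedP4 G f) (n : Fin 4) (Q : Prop) :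
    ¬ ∀ j ≠ n, (G.Adj (f n) (f j) ↔ Q) := by
  obtain ⟨j, k, hj, hk, hadj, hnadj⟩ : ∃ j k : Fin 4, j ≠ n ∧ k ≠ n ∧
      (n.val + 1 = j.val ∨ j.val + 1 = n.val) ∧
      ¬ (n.val + 1 = k.val ∨ k.val + 1 = n.val) := by
    revert n; decide
  intro h
  exact hnadj ((hf.2 n k).1 ((h k hk).2 ((h j hj).1 ((hf.2 n j).2 hadj))))

/-- A `P₄` and its complement are connected, so a `P₄` cannot straddle a join or a disjoint
union. -/
lemma forall_or_forall_not {P : α → Prop} (hf : IsInducedP4 G f) (Q : Prop)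
    (hcross : ∀ i j, P (f i) → ¬ P (f j) → (G.Adj (f i) (f j) ↔ Q)) :
    (∀ i, P (f i)) ∨ ∀ i, ¬ P (f i) := by
  have same : ∀ i j, (G.Adj (f i) (f j) ↔ ¬ Q) → (P (f i) ↔ P (f j)) := by
    intro i j h
    constructor
    · intro hi
      by_contra hj
      exact iff_not_self ((hcross i j hi hj).symm.trans h)
    · intro hj
      by_contra hi
      exact iff_not_self ((hcross j i hj hi).symm.trans ((G.adj_comm _ _).trans h))
  simp only [hf.2] at same
  have h0 : ∀ i, P (f i) ↔ P (f 0) := by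
    by_cases hQ : Q
    · have h02 := same 0 2
      have h03 := same 0 3
      have h13 := same 1 3
      simp only [hQ] at h02 h03 h13
      intro i; fin_cases i <;> simp_all
    · have h01 := same 0 1
      have h12 := same 1 2
      have h23 := same 2 3
      simp only [hQ] at h01 h12 h23
      intro i; fin_cases i <;> simp_all
  by_cases hP : P (f 0)
  · exact Or.inl fun i => (h0 i).2 hP
  · exact Or.inr fun i hi => hP ((h0 i).1 hi)

end IsInducedP4

lemma isCograph_iff_isCographOn {S : Set α} (hS : ∀ a b, G.Adj a b → a ∈ S) :
    IsCograph G ↔ IsCographOn G S := by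
  rw [isCograph_iff_forall_not_isInducedP4]
  refine ⟨fun h f _ => h f, fun h f hf => ?_⟩
  exact h f (fun i => hS _ _ (hf.exists_adj i).choose_spec) hf

lemma IsCographOn.of_agree {H : SimpleGraph α} {S S' : Set α} (h : IsCographOn G S)
    (hS : S' ⊆ S) (hGH : ∀ a ∈ S', ∀ b ∈ S', H.Adj a b ↔ G.Adj a b) :
    IsCographOn H S' :=
  fun f hf hP4 => h f (fun i => hS (hf i)) (hP4.congr fun i j => hGH _ (hf i) _ (hf j))

end InducedP4

namespace Cotree

variable {V : Type u}

lemma induction {motive : Cotree V → Prop} (leaf : ∀ v, motive (.leaf v))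
    (node : ∀ b ts, (∀ t ∈ ts, motive t) → motive (.node b ts)) : ∀ t, motive t
  | .leaf v => leaf v
  | .node b ts => node b ts fun t _ => induction leaf node t
decreasing_by simp_wf; have := List.sizeOf_lt_of_mem ‹t ∈ ts›; omega

variable {b : Bool} {ts : List (Cotree V)} {T t s u w : Cotree V} {N : Set V} {x y : V}

lemma leaves_node (b : Bool) (ts : List (Cotree V)) :
    (node b ts).leaves = ts.flatMap leaves := by
  rw [leaves]; simp [List.flatMap]

lemma mem_leaves_node : x ∈ (node b ts).leaves ↔ ∃ t ∈ ts, x ∈ t.leaves := by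
  simp [leaves_node]

lemma mem_leaves_node_of_mem (ht : t ∈ ts) (hx : x ∈ t.leaves) : x ∈ (node b ts).leaves :=
  mem_leaves_node.2 ⟨t, ht, hx⟩

lemma mem_subtrees_leaf {v : V} : u ∈ (leaf v).subtrees ↔ u = leaf v := by
  rw [subtrees]; simp

lemma mem_subtrees_node :
    u ∈ (node b ts).subtrees ↔ u = node b ts ∨ ∃ t ∈ ts, u ∈ t.subtrees := by
  rw [subtrees]; simp

lemma mem_subtrees_self (t : Cotree V) : t ∈ t.subtrees := by
  cases t with
  | leaf v => exact mem_subtrees_leaf.2 rfl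
  | node b ts => exact mem_subtrees_node.2 (Or.inl rfl)

lemma mem_subtrees_node_of_mem (ht : t ∈ ts) : t ∈ (node b ts).subtrees :=
  mem_subtrees_node.2 (Or.inr ⟨t, ht, mem_subtrees_self t⟩)

lemma mem_subtrees_trans (hu : u ∈ t.subtrees) (ht : t ∈ T.subtrees) : u ∈ T.subtrees := by
  induction T using Cotree.induction with
  | leaf v => rwa [mem_subtrees_leaf.1 ht] at hu
  | node b ts ih =>
    rcases mem_subtrees_node.1 ht with rfl | ⟨c, hc, htc⟩
    · exact hu
    · exact mem_subtrees_node.2 (Or.inr ⟨c, hc, ih c hc htc⟩)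

lemma mem_leaves_of_mem_subtrees (ht : t ∈ T.subtrees) (hx : x ∈ t.leaves) :
    x ∈ T.leaves := by
  induction T using Cotree.induction with
  | leaf v => rwa [mem_subtrees_leaf.1 ht] at hx
  | node b ts ih =>
    rcases mem_subtrees_node.1 ht with rfl | ⟨c, hc, htc⟩
    · exact hx
    · exact mem_leaves_node_of_mem hc (ih c hc htc)

lemma valid_node_iff : (node b ts).valid ↔
    2 ≤ ts.length ∧ ∀ t ∈ ts, t.valid ∧ ∀ b' ts', t = node b' ts' → b' ≠ b := by
  rw [valid]; simp

lemma valid_of_mem (hval : (node b ts).valid) (ht : t ∈ ts) : t.valid :=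
  ((valid_node_iff.1 hval).2 t ht).1

lemma valid_of_mem_subtrees (hval : T.valid) (ht : t ∈ T.subtrees) : t.valid := by
  induction T using Cotree.induction with
  | leaf v => rwa [mem_subtrees_leaf.1 ht]
  | node b ts ih =>
    rcases mem_subtrees_node.1 ht with rfl | ⟨c, hc, htc⟩
    · exact hval
    · exact ih c hc (valid_of_mem hval hc) htc

lemma exists_mem_leaves (hval : T.valid) : ∃ x, x ∈ T.leaves := by
  induction T using Cotree.induction with
  | leaf v => exact ⟨v, by simp [leaves]⟩
  | node b ts ih =>
    obtain ⟨c, hc⟩ : ∃ c, c ∈ ts :=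
      List.exists_mem_of_length_pos (by have := (valid_node_iff.1 hval).1; omega)
    obtain ⟨x, hx⟩ := ih c hc (valid_of_mem hval hc)
    exact ⟨x, mem_leaves_node_of_mem hc hx⟩

lemma nodup_leaves_of_mem (hnd : (node b ts).leaves.Nodup) (ht : t ∈ ts) : t.leaves.Nodup := by
  rw [leaves_node] at hnd
  exact (List.nodup_flatMap.1 hnd).1 t ht

lemma eq_of_mem_leaves (hnd : (node b ts).leaves.Nodup) (ht : t ∈ ts) (hs : s ∈ ts)
    (hxt : x ∈ t.leaves) (hxs : x ∈ s.leaves) : t = s := by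
  rw [leaves_node] at hnd
  have : Std.Symm (Function.onFun List.Disjoint (leaves (V := V))) := ⟨fun _ _ h => h.symm⟩
  by_contra hne
  exact (List.nodup_flatMap.1 hnd).2.forall ht hs hne hxt hxs

lemma eq_of_mem_subtrees (hval : (node b ts).valid) (hnd : (node b ts).leaves.Nodup)
    (ht : t ∈ ts) (hs : s ∈ ts) (hut : u ∈ t.subtrees) (hus : u ∈ s.subtrees) : t = s := by
  obtain ⟨x, hx⟩ := exists_mem_leaves (valid_of_mem_subtrees (valid_of_mem hval ht) hut)
  exact eq_of_mem_leaves hnd ht hs (mem_leaves_of_mem_subtrees hut hx)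
    (mem_leaves_of_mem_subtrees hus hx)

lemma adj_node_iff : (node b ts).adj x y ↔ (∃ t ∈ ts, t.adj x y) ∨
    (b = true ∧ ∃ t ∈ ts, ∃ s ∈ ts, t ≠ s ∧ x ∈ t.leaves ∧ y ∈ s.leaves) := by
  rw [adj]
  simp only [List.mem_attach, true_and, Subtype.exists, ne_eq, exists_prop]

lemma mem_leaves_of_adj (h : T.adj x y) : x ∈ T.leaves ∧ y ∈ T.leaves := by
  induction T using Cotree.induction with
  | leaf v => simp [adj] at h
  | node b ts ih =>
    rcases adj_node_iff.1 h with ⟨c, hc, hadj⟩ | ⟨-, c, hc, s, hs, -, hx, hy⟩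
    · exact (ih c hc hadj).imp (mem_leaves_node_of_mem hc) (mem_leaves_node_of_mem hc)
    · exact ⟨mem_leaves_node_of_mem hc hx, mem_leaves_node_of_mem hs hy⟩

lemma adj_symm (h : T.adj x y) : T.adj y x := by
  induction T using Cotree.induction with
  | leaf v => simp [adj] at h
  | node b ts ih =>
    rcases adj_node_iff.1 h with ⟨c, hc, hadj⟩ | ⟨hb, c, hc, s, hs, hne, hx, hy⟩
    · exact adj_node_iff.2 (Or.inl ⟨c, hc, ih c hc hadj⟩)
    · exact adj_node_iff.2 (Or.inr ⟨hb, s, hs, c, hc, Ne.symm hne, hy, hx⟩)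

lemma adj_node_iff_of_mem (hnd : (node b ts).leaves.Nodup) (ht : t ∈ ts)
    (hx : x ∈ t.leaves) (hy : y ∈ t.leaves) : (node b ts).adj x y ↔ t.adj x y := by
  refine ⟨fun h => ?_, fun h => adj_node_iff.2 (Or.inl ⟨t, ht, h⟩)⟩
  rcases adj_node_iff.1 h with ⟨c, hc, hadj⟩ | ⟨-, c, hc, s, hs, hne, hxc, hys⟩
  · rwa [eq_of_mem_leaves hnd hc ht (mem_leaves_of_adj hadj).1 hx] at hadj
  · exact absurd ((eq_of_mem_leaves hnd hc ht hxc hx).trans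
      (eq_of_mem_leaves hnd hs ht hys hy).symm) hne

lemma adj_node_iff_of_ne (hnd : (node b ts).leaves.Nodup) (ht : t ∈ ts) (hs : s ∈ ts)
    (hts : t ≠ s) (hx : x ∈ t.leaves) (hy : y ∈ s.leaves) :
    (node b ts).adj x y ↔ b = true := by
  refine ⟨fun h => ?_, fun hb => adj_node_iff.2 (Or.inr ⟨hb, t, ht, s, hs, hts, hx, hy⟩)⟩
  rcases adj_node_iff.1 h with ⟨c, hc, hadj⟩ | ⟨hb, -⟩
  · obtain ⟨hxc, hyc⟩ := mem_leaves_of_adj hadj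
    exact absurd ((eq_of_mem_leaves hnd ht hc hx hxc).trans
      (eq_of_mem_leaves hnd hc hs hyc hy)) hts
  · exact hb

lemma graphOf_adj : (graphOf T).Adj x y ↔ x ≠ y ∧ T.adj x y := by
  rw [graphOf, SimpleGraph.fromRel_adj, or_iff_left_of_imp adj_symm]

lemma graphOf_node_adj_iff_of_mem (hnd : (node b ts).leaves.Nodup) (ht : t ∈ ts)
    (hx : x ∈ t.leaves) (hy : y ∈ t.leaves) :
    (graphOf (node b ts)).Adj x y ↔ (graphOf t).Adj x y := by
  rw [graphOf_adj, graphOf_adj, adj_node_iff_of_mem hnd ht hx hy]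

lemma graphOf_node_adj_iff_of_ne (hnd : (node b ts).leaves.Nodup) (ht : t ∈ ts) (hs : s ∈ ts)
    (hts : t ≠ s) (hx : x ∈ t.leaves) (hy : y ∈ s.leaves) :
    (graphOf (node b ts)).Adj x y ↔ b = true := by
  rw [graphOf_adj, adj_node_iff_of_ne hnd ht hs hts hx hy, and_iff_right_iff_imp]
  rintro - rfl
  exact hts (eq_of_mem_leaves hnd ht hs hx hy)

theorem isCograph_graphOf (hnd : T.leaves.Nodup) : IsCograph (graphOf T) := by
  induction T using Cotree.induction with
  | leaf v =>
    refine isCograph_iff_forall_not_isInducedP4.2 fun f hf => ?_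
    obtain ⟨j, hj⟩ := hf.exists_adj 0
    simpa [adj] using (graphOf_adj.1 hj).2
  | node b ts ih =>
    refine isCograph_iff_forall_not_isInducedP4.2 fun f hf => ?_
    have hleaf : ∀ i, f i ∈ (node b ts).leaves := fun i =>
      (mem_leaves_of_adj (graphOf_adj.1 (hf.exists_adj i).choose_spec).2).1
    obtain ⟨c, hc, h0⟩ := mem_leaves_node.1 (hleaf 0)
    have hcross : ∀ i j, f i ∈ c.leaves → f j ∉ c.leaves →
        ((graphOf (node b ts)).Adj (f i) (f j) ↔ b = true) := by
      intro i j hi hj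
      obtain ⟨s, hs, hjs⟩ := mem_leaves_node.1 (hleaf j)
      exact graphOf_node_adj_iff_of_ne hnd hc hs (by rintro rfl; exact hj hjs) hi hjs
    rcases hf.forall_or_forall_not _ hcross with hin | hout
    · exact isCograph_iff_forall_not_isInducedP4.1 (ih c hc (nodup_leaves_of_mem hnd hc)) f
        (hf.congr fun i j => graphOf_node_adj_iff_of_mem hnd hc (hin i) (hin j))
    · exact hout 0 h0

lemma graphPlus_adj_some_some : (graphPlus T N).Adj (some x) (some y) ↔ (graphOf T).Adj x y := by
  simp [graphPlus, graphOf]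

lemma graphPlus_adj_none_some : (graphPlus T N).Adj none (some y) ↔ y ∈ N := by
  simp [graphPlus]

lemma graphPlus_adj_some_none : (graphPlus T N).Adj (some x) none ↔ x ∈ N := by
  simp [graphPlus]

lemma exists_eq_none_of_isInducedP4 (hnd : T.leaves.Nodup) {f : Fin 4 → Option V}
    (hf : IsInducedP4 (graphPlus T N) f) : ∃ n, f n = none := by
  by_contra! h
  choose g hg using fun i => Option.ne_none_iff_exists'.1 (h i)
  obtain rfl : f = some ∘ g := funext hg
  exact isCograph_iff_forall_not_isInducedP4.1 (isCograph_graphOf hnd) g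
    (hf.of_comp fun _ _ => graphPlus_adj_some_some)

/-- The new vertex `none` together with the leaves of `T`. -/
def plusLeaves (T : Cotree V) : Set (Option V) := {p | ∀ v ∈ p, v ∈ T.leaves}

@[simp] lemma none_mem_plusLeaves : none ∈ T.plusLeaves := by simp [plusLeaves]

@[simp] lemma some_mem_plusLeaves : some x ∈ T.plusLeaves ↔ x ∈ T.leaves := by
  simp [plusLeaves]

lemma isCograph_graphPlus_iff (hN : ∀ v ∈ N, v ∈ T.leaves) :
    IsCograph (graphPlus T N) ↔ IsCographOn (graphPlus T N) T.plusLeaves := by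
  refine isCograph_iff_isCographOn fun p q h => ?_
  rintro v rfl
  cases q with
  | none => exact hN v (graphPlus_adj_some_none.1 h)
  | some w => exact (mem_leaves_of_adj (graphOf_adj.1 (graphPlus_adj_some_some.1 h)).2).1

lemma plusLeaves_subset_of_mem (ht : t ∈ ts) : t.plusLeaves ⊆ (node b ts).plusLeaves :=
  fun _ hp v hv => mem_leaves_node_of_mem ht (hp v hv)

lemma graphPlus_node_adj_iff_of_mem (hnd : (node b ts).leaves.Nodup) (ht : t ∈ ts)
    {p q : Option V} (hp : p ∈ t.plusLeaves) (hq : q ∈ t.plusLeaves) :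
    (graphPlus (node b ts) N).Adj p q ↔ (graphPlus t N).Adj p q := by
  cases p with
  | none => cases q <;> simp [graphPlus_adj_none_some]
  | some x =>
    cases q with
    | none => simp [graphPlus_adj_some_none]
    | some y =>
      simp only [some_mem_plusLeaves] at hp hq
      simp only [graphPlus_adj_some_some, graphOf_node_adj_iff_of_mem hnd ht hp hq]

lemma mixed_iff : mixed N t ↔ (∃ a ∈ t.leaves, a ∈ N) ∧ ∃ v ∈ t.leaves, v ∉ N := by
  simp only [mixed, uniform, full, hollow, not_or, not_forall, not_not, exists_prop]
  tauto

lemma not_mixed_leaf (v : V) : ¬ mixed N (leaf v) := by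
  simp [mixed_iff, leaves]

lemma uniform.mem_iff (h : uniform N t) (hx : x ∈ t.leaves) (hy : y ∈ t.leaves) :
    x ∈ N ↔ y ∈ N := by
  rcases h with h | h
  · exact iff_of_true (h x hx) (h y hy)
  · exact iff_of_false (h x hx) (h y hy)

lemma exists_ne_of_mem (hval : (node b ts).valid) (hnd : (node b ts).leaves.Nodup) (ht : t ∈ ts) :
    ∃ s ∈ ts, s ≠ t := by
  obtain ⟨hlen, -⟩ := valid_node_iff.1 hval
  by_contra! h
  obtain _ | ⟨c, _ | ⟨d, rest⟩⟩ := ts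
  all_goals simp at hlen
  have hc := h c (by simp)
  have hd := h d (by simp)
  subst hc hd
  rw [leaves_node, List.flatMap_cons, List.flatMap_cons, ← List.append_assoc] at hnd
  obtain ⟨x, hx⟩ := exists_mem_leaves (valid_of_mem hval ht)
  exact List.disjoint_of_nodup_append (List.Nodup.of_append_left hnd) hx hx

lemma exists_mem_not_mem_of_mixed (hval : (node b ts).valid) (hnd : (node b ts).leaves.Nodup)
    (hmix : mixed N (node b ts)) : ∃ c₁ ∈ ts, ∃ c₂ ∈ ts, c₁ ≠ c₂ ∧
      (∃ a ∈ c₁.leaves, a ∈ N) ∧ ∃ v ∈ c₂.leaves, v ∉ N := by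
  obtain ⟨⟨a, ha, haN⟩, ⟨v, hv, hvN⟩⟩ := mixed_iff.1 hmix
  obtain ⟨c₁, hc₁, ha₁⟩ := mem_leaves_node.1 ha
  obtain ⟨c₂, hc₂, hv₂⟩ := mem_leaves_node.1 hv
  by_cases h : c₁ = c₂
  · subst h
    obtain ⟨s, hs, hsc⟩ := exists_ne_of_mem hval hnd hc₁
    obtain ⟨y, hy⟩ := exists_mem_leaves (valid_of_mem hval hs)
    by_cases hyN : y ∈ N
    · exact ⟨s, hs, c₁, hc₁, hsc, ⟨y, hy, hyN⟩, v, hv₂, hvN⟩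
    · exact ⟨c₁, hc₁, s, hs, hsc.symm, ⟨a, ha₁, haN⟩, y, hy, hyN⟩
  · exact ⟨c₁, hc₁, c₂, hc₂, h, ⟨a, ha₁, haN⟩, v, hv₂, hvN⟩

lemma isSeries_node : (node b ts).isSeries ↔ b = true := by
  cases b <;> simp [isSeries]

lemma isLcaNodeLeaf_node_iff_of_mem (hval : (node b ts).valid) (hnd : (node b ts).leaves.Nodup)
    (ht : t ∈ ts) (hut : u ∈ t.subtrees) (hy : y ∈ t.leaves) :
    IsLcaNodeLeaf (node b ts) w u y ↔ IsLcaNodeLeaf t w u y := by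
  refine ⟨fun ⟨hw, huw, hyw, hc⟩ => ?_, fun ⟨hw, huw, hyw, hc⟩ =>
    ⟨mem_subtrees_trans hw (mem_subtrees_node_of_mem ht), huw, hyw, hc⟩⟩
  rcases mem_subtrees_node.1 hw with rfl | ⟨t', ht', hwt'⟩
  · exact absurd ⟨hut, hy⟩ (hc t ht)
  · obtain rfl := eq_of_mem_subtrees hval hnd ht' ht (mem_subtrees_trans huw hwt') hut
    exact ⟨hwt', huw, hyw, hc⟩

lemma isLcaNodeLeaf_node_iff_of_ne (hval : (node b ts).valid) (hnd : (node b ts).leaves.Nodup)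
    (ht : t ∈ ts) (hs : s ∈ ts) (hst : s ≠ t) (hut : u ∈ t.subtrees) (hy : y ∈ s.leaves) :
    IsLcaNodeLeaf (node b ts) w u y ↔ w = node b ts := by
  constructor
  · rintro ⟨hw, huw, hyw, -⟩
    rcases mem_subtrees_node.1 hw with h | ⟨t', ht', hwt'⟩
    · exact h
    · obtain rfl := eq_of_mem_subtrees hval hnd ht' ht (mem_subtrees_trans huw hwt') hut
      exact absurd (eq_of_mem_leaves hnd hs ht' hy (mem_leaves_of_mem_subtrees hwt' hyw)) hst
  · rintro rfl
    refine ⟨mem_subtrees_self _, mem_subtrees_trans hut (mem_subtrees_node_of_mem ht),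
      mem_leaves_node_of_mem hs hy, fun c hc ⟨huc, hyc⟩ => hst ?_⟩
    obtain rfl := eq_of_mem_subtrees hval hnd hc ht huc hut
    exact eq_of_mem_leaves hnd hs hc hy hyc

lemma isInsertionNode_node_self_iff : IsInsertionNode (node b ts) N (node b ts) ↔
    mixed N (node b ts) ∧ ∀ c ∈ ts, uniform N c := by
  simp only [IsInsertionNode, mem_subtrees_self, children, true_and]
  exact and_congr_right fun _ => and_iff_left fun y hy hy' => absurd hy hy'

lemma isInsertionNode_node_iff_of_mem (hval : (node b ts).valid) (hnd : (node b ts).leaves.Nodup)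
    (ht : t ∈ ts) (hut : u ∈ t.subtrees) :
    IsInsertionNode (node b ts) N u ↔ IsInsertionNode t N u ∧
      ∀ s ∈ ts, s ≠ t → ∀ y ∈ s.leaves, (y ∈ N ↔ b = true) := by
  have lca_mem {y} (hy : y ∈ t.leaves) :
      (∃ w, IsLcaNodeLeaf (node b ts) w u y ∧ w.isSeries) ↔
        ∃ w, IsLcaNodeLeaf t w u y ∧ w.isSeries :=
    exists_congr fun w =>
      and_congr_left' (isLcaNodeLeaf_node_iff_of_mem (w := w) hval hnd ht hut hy)
  have lca_ne {s y} (hs : s ∈ ts) (hst : s ≠ t) (hy : y ∈ s.leaves) :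
      (∃ w, IsLcaNodeLeaf (node b ts) w u y ∧ w.isSeries) ↔ b = true := by
    simp [isLcaNodeLeaf_node_iff_of_ne hval hnd ht hs hst hut hy, isSeries_node]
  have not_mem_u {s y} (hs : s ∈ ts) (hst : s ≠ t) (hy : y ∈ s.leaves) : y ∉ u.leaves :=
    fun hyu => hst (eq_of_mem_leaves hnd hs ht hy (mem_leaves_of_mem_subtrees hut hyu))
  simp only [IsInsertionNode, mem_subtrees_trans hut (mem_subtrees_node_of_mem ht), hut, true_and,
    and_assoc]
  refine and_congr_right fun _ => and_congr_right fun _ => ⟨fun h => ⟨fun y hy hyu => ?_,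
    fun s hs hst y hy => ?_⟩, fun ⟨hin, hout⟩ y hy hyu => ?_⟩
  · exact (h y (mem_leaves_node_of_mem ht hy) hyu).trans (lca_mem hy)
  · exact (h y (mem_leaves_node_of_mem hs hy) (not_mem_u hs hst hy)).trans (lca_ne hs hst hy)
  · obtain ⟨s, hs, hys⟩ := mem_leaves_node.1 hy
    by_cases hst : s = t
    · subst hst
      exact (hin y hys hyu).trans (lca_mem hys).symm
    · exact (hout s hs hst y hys).trans (lca_ne hs hst hys).symm

lemma isCographOn_graphPlus_node_of_uniform (hnd : (node b ts).leaves.Nodup)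
    (hunif : ∀ c ∈ ts, uniform N c) :
    IsCographOn (graphPlus (node b ts) N) (node b ts).plusLeaves := by
  intro f hfS hf
  -- `P` holds at `x` and at the leaves `v` with `v ∈ N ↔ b = false`. The children are uniform, so
  -- across `P` every pair is adjacent iff `b`; inside `P`, `x` is universal or isolated.
  set P : Option V → Prop := fun p => ∀ v ∈ p, (v ∈ N ↔ b = false)
  have hcross : ∀ i j, P (f i) → ¬ P (f j) →
      ((graphPlus (node b ts) N).Adj (f i) (f j) ↔ b = true) := by
    intro i j hi hj
    obtain ⟨w, hfj, hw⟩ : ∃ w, f j = some w ∧ ¬ (w ∈ N ↔ b = false) := by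
      simpa [P, Option.mem_def] using hj
    obtain ⟨s, hs, hws⟩ := mem_leaves_node.1 (hfS j w hfj)
    rw [hfj]
    cases hfi : f i with
    | none => cases b <;> simpa [graphPlus_adj_none_some] using hw
    | some v =>
      obtain ⟨c, hc, hvc⟩ := mem_leaves_node.1 (hfS i v hfi)
      have hv : v ∈ N ↔ b = false := hi v (hfi ▸ rfl)
      have hcs : c ≠ s := by
        rintro rfl
        exact hw (((hunif c hc).mem_iff hws hvc).trans hv)
      rw [graphPlus_adj_some_some, graphOf_node_adj_iff_of_ne hnd hc hs hcs hvc hws]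
  obtain ⟨n, hn⟩ := exists_eq_none_of_isInducedP4 hnd hf
  rcases hf.forall_or_forall_not _ hcross with hin | hout
  · refine hf.not_forall_adj_iff n (b = false) fun j hj => ?_
    obtain ⟨v, hv⟩ := Option.ne_none_iff_exists'.1 fun h => hj (hf.1 (h.trans hn.symm))
    rw [hn, hv, graphPlus_adj_none_some]
    exact hin j v (hv ▸ rfl)
  · exact hout n (by simp [P, hn])

lemma isCographOn_graphPlus_node_of_mem (hnd : (node b ts).leaves.Nodup) (ht : t ∈ ts)
    (hsib : ∀ s ∈ ts, s ≠ t → ∀ y ∈ s.leaves, (y ∈ N ↔ b = true))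
    (hcog : IsCographOn (graphPlus t N) t.plusLeaves) :
    IsCographOn (graphPlus (node b ts) N) (node b ts).plusLeaves := by
  intro f hfS hf
  have hcross : ∀ i j, f i ∈ t.plusLeaves → f j ∉ t.plusLeaves →
      ((graphPlus (node b ts) N).Adj (f i) (f j) ↔ b = true) := by
    intro i j hi hj
    obtain ⟨y, hfj, hyt⟩ : ∃ y, f j = some y ∧ y ∉ t.leaves := by
      simpa [plusLeaves, Option.mem_def] using hj
    obtain ⟨s, hs, hys⟩ := mem_leaves_node.1 (hfS j y hfj)
    have hst : s ≠ t := by rintro rfl; exact hyt hys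
    rw [hfj]
    cases hfi : f i with
    | none => exact graphPlus_adj_none_some.trans (hsib s hs hst y hys)
    | some x =>
      rw [hfi, some_mem_plusLeaves] at hi
      rw [graphPlus_adj_some_some, graphOf_node_adj_iff_of_ne hnd ht hs hst.symm hi hys]
  rcases hf.forall_or_forall_not _ hcross with hin | hout
  · exact hcog f hin (hf.congr fun i j => graphPlus_node_adj_iff_of_mem hnd ht (hin i) (hin j))
  · obtain ⟨n, hn⟩ := exists_eq_none_of_isInducedP4 hnd hf
    exact hout n (hn ▸ none_mem_plusLeaves)

theorem isCographOn_graphPlus_of_isInsertionNode (hval : T.valid) (hnd : T.leaves.Nodup)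
    (hu : IsInsertionNode T N u) : IsCographOn (graphPlus T N) T.plusLeaves := by
  induction T using Cotree.induction with
  | leaf v =>
    obtain rfl := mem_subtrees_leaf.1 hu.1
    exact absurd hu.2.1 (not_mixed_leaf v)
  | node b ts ih =>
    rcases mem_subtrees_node.1 hu.1 with rfl | ⟨t, ht, hut⟩
    · exact isCographOn_graphPlus_node_of_uniform hnd (isInsertionNode_node_self_iff.1 hu).2
    · obtain ⟨hut', hsib⟩ := (isInsertionNode_node_iff_of_mem hval hnd ht hut).1 hu
      exact isCographOn_graphPlus_node_of_mem hnd ht hsib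
        (ih t ht (valid_of_mem hval ht) (nodup_leaves_of_mem hnd ht) hut')

lemma exists_eq_node_not_of_mixed (hval : (node b ts).valid) (ht : t ∈ ts) (hmix : mixed N t) :
    ∃ l, t = node (!b) l := by
  cases t with
  | leaf v => exact absurd hmix (not_mixed_leaf v)
  | node b' l =>
    have := ((valid_node_iff.1 hval).2 _ ht).2 b' l rfl
    exact ⟨l, by cases b <;> cases b' <;> simp_all⟩

lemma mem_iff_of_mixed_sibling (hval : (node b ts).valid) (hnd : (node b ts).leaves.Nodup)
    (hcog : IsCographOn (graphPlus (node b ts) N) (node b ts).plusLeaves)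
    (ht : t ∈ ts) (hmix : mixed N t) (hs : s ∈ ts) (hst : s ≠ t) (hy : y ∈ s.leaves) :
    y ∈ N ↔ b = true := by
  obtain ⟨l, rfl⟩ := exists_eq_node_not_of_mixed hval ht hmix
  obtain ⟨c₁, hc₁, c₂, hc₂, hc, ⟨a, ha, haN⟩, v, hv, hvN⟩ :=
    exists_mem_not_mem_of_mixed (valid_of_mem hval ht) (nodup_leaves_of_mem hnd ht) hmix
  have hat := mem_leaves_node_of_mem (b := !b) hc₁ ha
  have hvt := mem_leaves_node_of_mem (b := !b) hc₂ hv
  have hav : (graphPlus (node b ts) N).Adj (some a) (some v) ↔ b = false := by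
    rw [graphPlus_adj_some_some, graphOf_node_adj_iff_of_mem hnd ht hat hvt,
      graphOf_node_adj_iff_of_ne (nodup_leaves_of_mem hnd ht) hc₁ hc₂ hc ha hv]
    cases b <;> simp
  have hay : (graphPlus (node b ts) N).Adj (some a) (some y) ↔ b = true := by
    rw [graphPlus_adj_some_some, graphOf_node_adj_iff_of_ne hnd ht hs hst.symm hat hy]
  have hvy : (graphPlus (node b ts) N).Adj (some v) (some y) ↔ b = true := by
    rw [graphPlus_adj_some_some, graphOf_node_adj_iff_of_ne hnd ht hs hst.symm hvt hy]
  have hxa : (graphPlus (node b ts) N).Adj none (some a) := graphPlus_adj_none_some.2 haN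
  have hxv : ¬ (graphPlus (node b ts) N).Adj none (some v) := mt graphPlus_adj_none_some.1 hvN
  have hxy : (graphPlus (node b ts) N).Adj none (some y) ↔ y ∈ N := graphPlus_adj_none_some
  have hne_ay : a ≠ y := fun h => hst (eq_of_mem_leaves hnd hs ht hy (h ▸ hat))
  have hne_vy : v ≠ y := fun h => hst (eq_of_mem_leaves hnd hs ht hy (h ▸ hvt))
  have hne_av : a ≠ v := fun h => hvN (h ▸ haN)
  have hmem : a ∈ (node b ts).leaves ∧ v ∈ (node b ts).leaves ∧ y ∈ (node b ts).leaves :=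
    ⟨mem_leaves_node_of_mem ht hat, mem_leaves_node_of_mem ht hvt, mem_leaves_node_of_mem hs hy⟩
  by_contra hyN
  cases b
  · refine hcog ![some v, some a, none, some y] ?_ (isInducedP4_path ?_ ?_ ?_ ?_ ?_ ?_ ?_ ?_ ?_)
    · intro i; fin_cases i <;> simp_all
    all_goals simp_all [SimpleGraph.adj_comm]
  · refine hcog ![none, some a, some y, some v] ?_ (isInducedP4_path ?_ ?_ ?_ ?_ ?_ ?_ ?_ ?_ ?_)
    · intro i; fin_cases i <;> simp_all
    all_goals simp_all [SimpleGraph.adj_comm]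

theorem exists_isInsertionNode_of_isCographOn (hval : T.valid) (hnd : T.leaves.Nodup)
    (hmix : mixed N T) (hcog : IsCographOn (graphPlus T N) T.plusLeaves) :
    ∃ u, IsInsertionNode T N u := by
  induction T using Cotree.induction with
  | leaf v => exact absurd hmix (not_mixed_leaf v)
  | node b ts ih =>
    by_cases hunif : ∀ c ∈ ts, uniform N c
    · exact ⟨_, isInsertionNode_node_self_iff.2 ⟨hmix, hunif⟩⟩
    obtain ⟨t, ht, hmixt⟩ : ∃ t ∈ ts, mixed N t := by simpa [mixed] using hunif
    have hcogt : IsCographOn (graphPlus t N) t.plusLeaves :=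
      hcog.of_agree (plusLeaves_subset_of_mem ht) fun p hp q hq =>
        (graphPlus_node_adj_iff_of_mem hnd ht hp hq).symm
    obtain ⟨u, hu⟩ := ih t ht (valid_of_mem hval ht) (nodup_leaves_of_mem hnd ht) hmixt hcogt
    exact ⟨u, (isInsertionNode_node_iff_of_mem hval hnd ht hu.1).2 ⟨hu,
      fun s hs hst y hy => mem_iff_of_mixed_sibling hval hnd hcog ht hmixt hs hst hy⟩⟩

end Cotree

theorem stmt_6 {V : Type u} (T : Cotree V) (Nx : Set V)
    (hval : T.valid) (hnd : T.leaves.Nodup)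
    (hNx : ∀ v ∈ Nx, v ∈ T.leaves) (hmix : Cotree.mixed Nx T) :
    IsCograph (Cotree.graphPlus T Nx) ↔ ∃ u : Cotree V, Cotree.IsInsertionNode T Nx u := by
  rw [Cotree.isCograph_graphPlus_iff hNx]
  exact ⟨Cotree.exists_isInsertionNode_of_isCographOn hval hnd hmix,
    fun ⟨_, hu⟩ => Cotree.isCographOn_graphPlus_of_isInsertionNode hval hnd hu⟩
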